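/- Let U be a d×r real matrix with orthonormal columns, let y = x + v where x lies in the column span of U and v is orthogonal to the column span of U, and let Ω be any list of m indices from [d]. If U_Ω^T U_Ω is invertible, then ‖v_Ω‖₂² − ‖(U_Ω^T U_Ω)^{-1}‖₂·‖U_Ω^T v_Ω‖₂² ≤ ‖y_Ω − P_{U_Ω} y_Ω‖₂² ≤ ‖v_Ω‖₂². -/

import Mathlib

/-! Since `x_Ω` lies in the column span `K` of `U_Ω`, the residual of `y_Ω` is that of `v_Ω`,
which by Pythagoras has squared norm `‖v_Ω‖² - ‖P_K v_Ω‖²`. Writing `P_K v_Ω = U_Ω a`, the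
normal equations read `G a = w` with `G = U_Ωᵀ U_Ω` and `w = U_Ωᵀ v_Ω`, so
`‖P_K v_Ω‖² = ⟪a, w⟫ = wᵀ G⁻¹ w`, which is at most `‖G⁻¹‖₂ ‖w‖²`. -/

open Matrix

/- Probability of an event under the uniform distribution on a finite type. -/
open scoped Classical in
noncomputable def unifProb {α : Type*} [Fintype α] (P : α → Prop) : ℝ :=
  (Finset.univ.filter fun a => P a).card / Fintype.card α

/-- Squared Euclidean norm of a vector in ℝ^d. -/
def sq2 {d : ℕ} (x : Fin d → ℝ) : ℝ := ∑ i, x i ^ 2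

/-- Vector coherence μ(v) = d·‖v‖∞²/‖v‖₂². -/
noncomputable def vecCoh {d : ℕ} (v : Fin d → ℝ) : ℝ :=
  ((d : ℝ) * ⨆ i, v i ^ 2) / sq2 v

/-- Coherence μ(U) = (d/r)·max_i ‖P_U e_i‖₂² of the column span of a d×r matrix U with
orthonormal columns; here ‖P_U e_i‖₂² = ∑ k (U i k)². -/
noncomputable def matCoh {d r : ℕ} (U : Matrix (Fin d) (Fin r) ℝ) : ℝ :=
  ((d : ℝ) / r) * ⨆ i : Fin d, ∑ k, U i k ^ 2

/-- ‖y_Ω − P_{U_Ω} y_Ω‖₂²: squared norm of the residual of the orthogonal projection of the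
subsampled vector y_Ω onto the column span of the subsampled matrix U_Ω. -/
noncomputable def projResidSq {d r m : ℕ} (U : Matrix (Fin d) (Fin r) ℝ)
    (y : Fin d → ℝ) (Ω : Fin m → Fin d) : ℝ :=
  let yΩ : EuclideanSpace ℝ (Fin m) := WithLp.toLp 2 fun j => y (Ω j)
  let S : Submodule ℝ (EuclideanSpace ℝ (Fin m)) :=
    Submodule.span ℝ (Set.range fun k : Fin r => (WithLp.toLp 2 fun j => U (Ω j) k : EuclideanSpace ℝ (Fin m)))
  ‖yΩ - (S.orthogonalProjectionOnto yΩ : EuclideanSpace ℝ (Fin m))‖ ^ 2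

/-- The row-subsampled matrix U_Ω whose j-th row is the Ω(j)-th row of U. -/
def subMat {d r m : ℕ} (U : Matrix (Fin d) (Fin r) ℝ) (Ω : Fin m → Fin d) :
    Matrix (Fin m) (Fin r) ℝ :=
  Matrix.of fun j k => U (Ω j) k

/-- Spectral (ℓ2 operator) norm of a matrix. -/
noncomputable def specNorm {p q : ℕ} (M : Matrix (Fin p) (Fin q) ℝ) : ℝ :=
  ‖(Matrix.toEuclideanLin M).toContinuousLinearMap‖

open scoped InnerProductSpace

section GramProjection

variable {E ι : Type*} [NormedAddCommGroup E] [InnerProductSpace ℝ E] [Fintype ι]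
  {b : ι → E} [(Submodule.span ℝ (Set.range b)).HasOrthogonalProjection] {v : E} {a : ι → ℝ}

theorem gram_mulVec_eq_inner_of_sum_eq_starProjection
    (ha : ∑ k, a k • b k = (Submodule.span ℝ (Set.range b)).starProjection v) :
    gram ℝ b *ᵥ a = fun k => ⟪b k, v⟫_ℝ := by
  funext k
  have hbk : b k ∈ Submodule.span ℝ (Set.range b) := Submodule.subset_span ⟨k, rfl⟩
  calc (gram ℝ b *ᵥ a) k = ⟪b k, ∑ l, a l • b l⟫_ℝ := by
        simp only [mulVec, dotProduct, gram_apply, inner_sum, real_inner_smul_right, mul_comm]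
    _ = ⟪b k, v⟫_ℝ := by
        rw [ha, ← Submodule.inner_starProjection_left_eq_right,
          Submodule.starProjection_eq_self_iff.2 hbk]

theorem norm_starProjection_sq_eq_dotProduct_of_sum_eq
    (ha : ∑ k, a k • b k = (Submodule.span ℝ (Set.range b)).starProjection v) :
    ‖(Submodule.span ℝ (Set.range b)).starProjection v‖ ^ 2 = a ⬝ᵥ fun k => ⟪b k, v⟫_ℝ := by
  set P := (Submodule.span ℝ (Set.range b)).starProjection
  calc ‖P v‖ ^ 2 = ⟪P v, v⟫_ℝ := by
        rw [← real_inner_self_eq_norm_sq, Submodule.inner_starProjection_left_eq_right,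
          Submodule.starProjection_eq_self_iff.2 (Submodule.starProjection_apply_mem _ v),
          real_inner_comm]
    _ = a ⬝ᵥ fun k => ⟪b k, v⟫_ℝ := by
        simp only [← ha, sum_inner, real_inner_smul_left, dotProduct]

variable [DecidableEq ι]

theorem norm_starProjection_span_sq_eq_dotProduct_inv_gram (hG : IsUnit (gram ℝ b)) (v : E) :
    ‖(Submodule.span ℝ (Set.range b)).starProjection v‖ ^ 2 =
      (fun k => ⟪b k, v⟫_ℝ) ⬝ᵥ (gram ℝ b)⁻¹ *ᵥ fun k => ⟪b k, v⟫_ℝ := by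
  obtain ⟨a, ha⟩ := (Submodule.mem_span_range_iff_exists_fun ℝ).1
    ((Submodule.span ℝ (Set.range b)).starProjection_apply_mem v)
  have hGa : a = (gram ℝ b)⁻¹ *ᵥ fun k => ⟪b k, v⟫_ℝ := by
    rw [← gram_mulVec_eq_inner_of_sum_eq_starProjection ha, mulVec_mulVec,
      nonsing_inv_mul _ ((isUnit_iff_isUnit_det _).1 hG), one_mulVec]
  rw [norm_starProjection_sq_eq_dotProduct_of_sum_eq ha, dotProduct_comm, hGa]

end GramProjection

theorem dotProduct_mulVec_le_opNorm_mul_sum_sq {ι : Type*} [Fintype ι] [DecidableEq ι]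
    (M : Matrix ι ι ℝ) (w : ι → ℝ) :
    w ⬝ᵥ M *ᵥ w ≤ ‖(toEuclideanLin M).toContinuousLinearMap‖ * ∑ k, w k ^ 2 := by
  set W : EuclideanSpace ℝ ι := WithLp.toLp 2 w
  have hW : ‖W‖ ^ 2 = ∑ k, w k ^ 2 := EuclideanSpace.real_norm_sq_eq W
  calc w ⬝ᵥ M *ᵥ w = ⟪W, toEuclideanLin M W⟫_ℝ := by
        rw [toLpLin_toLp, EuclideanSpace.inner_toLp_toLp, star_trivial, dotProduct_comm]
        rfl
    _ ≤ ‖W‖ * ‖toEuclideanLin M W‖ := real_inner_le_norm _ _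
    _ ≤ ‖W‖ * (‖(toEuclideanLin M).toContinuousLinearMap‖ * ‖W‖) :=
        mul_le_mul_of_nonneg_left ((toEuclideanLin M).toContinuousLinearMap.le_opNorm W)
          (norm_nonneg _)
    _ = _ := by rw [← hW]; ring

theorem Submodule.norm_add_sub_starProjection_sq {𝕜 E : Type*} [RCLike 𝕜] [NormedAddCommGroup E]
    [InnerProductSpace 𝕜 E] (K : Submodule 𝕜 E) [K.HasOrthogonalProjection] {x : E} (hx : x ∈ K)
    (v : E) : ‖x + v - K.starProjection (x + v)‖ ^ 2 = ‖v‖ ^ 2 - ‖K.starProjection v‖ ^ 2 := by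
  rw [map_add, K.starProjection_eq_self_iff.2 hx, add_sub_add_left_eq_sub,
    ← K.starProjection_orthogonal_val, K.norm_sq_eq_add_norm_sq_starProjection v]
  ring

namespace Matrix

variable {m n : Type*} (A : Matrix m n ℝ)

def euclideanCol (k : n) : EuclideanSpace ℝ m := WithLp.toLp 2 (Aᵀ k)

theorem gram_euclideanCol [Fintype m] : gram ℝ A.euclideanCol = Aᵀ * A := by
  ext k l
  simp only [euclideanCol, gram_apply, EuclideanSpace.inner_toLp_toLp, star_trivial, mul_apply,
    dotProduct, transpose_apply, mul_comm]

theorem inner_euclideanCol_toLp [Fintype m] (u : m → ℝ) :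
    (fun k => ⟪A.euclideanCol k, WithLp.toLp 2 u⟫_ℝ) = Aᵀ *ᵥ u := by
  funext k
  rw [euclideanCol, EuclideanSpace.inner_toLp_toLp, star_trivial, dotProduct_comm]
  rfl

theorem toLp_mulVec_mem_span_euclideanCol [Fintype n] (c : n → ℝ) :
    WithLp.toLp 2 (A *ᵥ c) ∈ Submodule.span ℝ (Set.range A.euclideanCol) := by
  refine (Submodule.mem_span_range_iff_exists_fun ℝ).2 ⟨c, ?_⟩
  ext j
  simp only [euclideanCol, WithLp.ofLp_sum, WithLp.ofLp_smul, Finset.sum_apply, Pi.smul_apply,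
    smul_eq_mul, mulVec, dotProduct, transpose_apply, mul_comm]

end Matrix

theorem projection_residual_sandwich_general
    {d r m : ℕ} (U : Matrix (Fin d) (Fin r) ℝ)
    (x v y : Fin d → ℝ) (c : Fin r → ℝ) (hx : x = U.mulVec c)
    (hy : y = x + v)
    (Ω : Fin m → Fin d)
    (hinv : IsUnit ((subMat U Ω)ᵀ * subMat U Ω)) :
    (∑ j, v (Ω j) ^ 2) -
        specNorm ((subMat U Ω)ᵀ * subMat U Ω)⁻¹ * (∑ k, (∑ j, U (Ω j) k * v (Ω j)) ^ 2) ≤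
      projResidSq U y Ω ∧
      projResidSq U y Ω ≤ ∑ j, v (Ω j) ^ 2 := by
  set A := subMat U Ω
  set K := Submodule.span ℝ (Set.range A.euclideanCol)
  set vΩ : EuclideanSpace ℝ (Fin m) := WithLp.toLp 2 (v ∘ Ω)
  have hresid : projResidSq U y Ω = ‖vΩ‖ ^ 2 - ‖K.starProjection vΩ‖ ^ 2 := by
    rw [← K.norm_add_sub_starProjection_sq (A.toLp_mulVec_mem_span_euclideanCol c)]
    subst hy hx
    rfl
  have hproj : ‖K.starProjection vΩ‖ ^ 2 = (Aᵀ *ᵥ (v ∘ Ω)) ⬝ᵥ (Aᵀ * A)⁻¹ *ᵥ Aᵀ *ᵥ (v ∘ Ω) := by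
    rw [norm_starProjection_span_sq_eq_dotProduct_inv_gram ((gram_euclideanCol A).symm ▸ hinv),
      inner_euclideanCol_toLp, gram_euclideanCol]
  have hvΩ : ‖vΩ‖ ^ 2 = ∑ j, v (Ω j) ^ 2 := EuclideanSpace.real_norm_sq_eq vΩ
  rw [hresid, hvΩ]
  refine ⟨?_, sub_le_self _ (sq_nonneg _)⟩
  rw [hproj]
  exact sub_le_sub_left (dotProduct_mulVec_le_opNorm_mul_sum_sq _ _) _

/-- Deterministic sandwich for the projection residual: let U be a d×r matrix with orthonormal
columns, y = x + v with x in the column span of U and v orthogonal to it, and Ω any list of m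
indices from [d].  If U_Ωᵀ·U_Ω is invertible, then
‖v_Ω‖₂² − ‖(U_Ωᵀ·U_Ω)⁻¹‖₂·‖U_Ωᵀ v_Ω‖₂² ≤ ‖y_Ω − P_{U_Ω} y_Ω‖₂² ≤ ‖v_Ω‖₂². -/
theorem projection_residual_sandwich
    {d r m : ℕ} (U : Matrix (Fin d) (Fin r) ℝ) (hU : Uᵀ * U = 1)
    (x v y : Fin d → ℝ) (c : Fin r → ℝ) (hx : x = U.mulVec c)
    (hv : Uᵀ.mulVec v = 0) (hy : y = x + v)
    (Ω : Fin m → Fin d)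
    (hinv : IsUnit ((subMat U Ω)ᵀ * subMat U Ω)) :
    (∑ j, v (Ω j) ^ 2) -
        specNorm ((subMat U Ω)ᵀ * subMat U Ω)⁻¹ * (∑ k, (∑ j, U (Ω j) k * v (Ω j)) ^ 2) ≤
      projResidSq U y Ω ∧
      projResidSq U y Ω ≤ ∑ j, v (Ω j) ^ 2 :=
  projection_residual_sandwich_general U x v y c hx hy Ω hinv
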